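/- arXiv:1906.08010 — 5 statements merged into one kernel-verified Lean document; each statement's English description precedes it below -/
import Mathlib

section
/- Let n ≥ 2, r = ⌊n/2⌋, and P' = {(i,j) ∈ ℤ×ℤ : 1 ≤ i < j ≤ n, i + j ≤ n}. Then |P'| = (1/2)( n(n−1)/2 − ⌊n/2⌋ ), and (−1)^{|P'|} = sgn(τ_n), i.e., |P'| is even when n is even or n ≡ 1 (mod 4), and odd when n ≡ 3 (mod 4). -/
/-!
Both `|P'|` and the number of inversions of `τ` equal `∑_{a<n} ⌊a/2⌋`. For `|P'|`, group the
pairs by `i + j = a + 1`: there are `⌊a/2⌋` of them, indexed by the odd numbers `2i - 1 < a`.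
For `τ` (0-indexed), a pair `b < a` is inverted exactly when `b` is odd, since `τ` sends the even
positions increasingly onto the bottom half and the odd ones decreasingly onto the top half.
The sum is `⌊n/2⌋ ⌊(n-1)/2⌋`, and twice it is `n(n-1)/2 - ⌊n/2⌋` because `∑_{a<n} a` exceeds
`2 ∑_{a<n} ⌊a/2⌋` by the number `⌊n/2⌋` of odd `a < n`.
-/

open Finset Equiv Equiv.Perm

theorem sign_eq_signAux {n : ℕ} (f : Perm (Fin n)) : sign f = signAux f := by
  induction f using swap_induction_on with
  | one => rw [map_one, signAux_one]
  | swap_mul f x y hxy ih =>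
    rw [Perm.sign_mul, signAux_mul, ih, sign_swap hxy, signAux_swap hxy]

theorem sign_eq_neg_one_pow_card_filter_le {n : ℕ} (f : Perm (Fin n)) :
    sign f = (-1) ^ #{x ∈ finPairsLT n | f x.1 ≤ f x.2} := by
  rw [sign_eq_signAux, signAux, prod_ite, prod_const, prod_const, one_pow, mul_one]

theorem card_finPairsLT_filter_snd (n : ℕ) (p : ℕ → Prop) [DecidablePred p] :
    #{x ∈ finPairsLT n | p x.2} = ∑ a ∈ range n, #{b ∈ range a | p b} := by
  rw [finPairsLT, filter_sigma, card_sigma, ← Fin.sum_univ_eq_sum_range]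
  refine sum_congr rfl fun a _ => ?_
  rw [← card_attachFin _ fun b hb => (mem_range.1 (mem_filter.1 hb).1).trans a.2]
  congr 1
  ext b
  simp

theorem apply_le_apply_iff_of_lt {n : ℕ} {τ : Perm (Fin n)}
    (hτodd : ∀ i : Fin n, i.val % 2 = 0 → (τ i).val = i.val / 2)
    (hτeven : ∀ i : Fin n, i.val % 2 = 1 → (τ i).val = n - (i.val + 1) / 2)
    {a b : Fin n} (hba : b < a) : τ a ≤ τ b ↔ 2 ∣ b.val + 1 := by
  have hτ (i : Fin n) : (τ i).val = if i.val % 2 = 0 then i.val / 2 else n - (i.val + 1) / 2 := by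
    split_ifs with h
    exacts [hτodd i h, hτeven i (by omega)]
  rw [Fin.lt_def] at hba
  rw [Fin.le_iff_val_le_val, hτ, hτ]
  have := a.2
  split_ifs <;> omega

theorem card_filter_lt_add_le (n : ℕ) :
    #{p ∈ Icc 1 n ×ˢ Icc 1 n | p.1 < p.2 ∧ p.1 + p.2 ≤ n} = ∑ a ∈ range n, a / 2 := by
  rw [card_eq_sum_card_fiberwise (f := fun p => p.1 + p.2 - 1) (t := range n)
    fun p hp => by simp at hp ⊢; omega]
  refine sum_congr rfl fun a ha => ?_
  rw [mem_range] at ha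
  rw [← Nat.card_multiples a 2]
  refine card_nbij' (fun p => 2 * p.1 - 1) (fun b => ((b + 1) / 2, a + 1 - (b + 1) / 2))
    ?_ ?_ ?_ ?_ <;> intro p hp <;> simp [Prod.ext_iff] at hp ⊢ <;> omega

theorem two_mul_sum_range_div_two_add (n : ℕ) :
    2 * ∑ a ∈ range n, a / 2 + n / 2 = ∑ a ∈ range n, a := by
  induction n with
  | zero => rfl
  | succ n ih => rw [sum_range_succ, sum_range_succ]; omega

theorem sum_range_div_two (n : ℕ) : ∑ a ∈ range n, a / 2 = n / 2 * ((n - 1) / 2) := by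
  induction n with
  | zero => rfl
  | succ n ih =>
    rw [sum_range_succ, ih]
    obtain ⟨k, rfl | rfl⟩ := Nat.even_or_odd' n
    · rw [show 2 * k / 2 = k by omega, show (2 * k + 1) / 2 = k by omega,
        show (2 * k + 1 - 1) / 2 = k by omega]
      cases k with
      | zero => rfl
      | succ k => rw [show (2 * (k + 1) - 1) / 2 = k by omega]; ring
    · rw [show (2 * k + 1) / 2 = k by omega, show (2 * k + 1 + 1) / 2 = k + 1 by omega,
        show (2 * k + 1 - 1) / 2 = k by omega, show (2 * k + 1 + 1 - 1) / 2 = k by omega]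
      ring

theorem card_P'_and_sign_general (n : ℕ)
    (P' : Finset (ℕ × ℕ))
    (hP' : P' = (Finset.Icc 1 n ×ˢ Finset.Icc 1 n).filter
      (fun p => p.1 < p.2 ∧ p.1 + p.2 ≤ n))
    (τ : Equiv.Perm (Fin n))
    (hτodd : ∀ i : Fin n, i.val % 2 = 0 → (τ i).val = i.val / 2)
    (hτeven : ∀ i : Fin n, i.val % 2 = 1 → (τ i).val = n - (i.val + 1) / 2) :
    2 * P'.card = n * (n - 1) / 2 - n / 2 ∧
    ((-1 : ℤ) ^ P'.card = (Equiv.Perm.sign τ : ℤ)) ∧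
    (Even P'.card ↔ (n % 2 = 0 ∨ n % 4 = 1)) := by
  have hP : #P' = ∑ a ∈ range n, a / 2 := hP' ▸ card_filter_lt_add_le n
  have hτ : #{x ∈ finPairsLT n | τ x.1 ≤ τ x.2} = ∑ a ∈ range n, a / 2 := by
    rw [filter_congr fun x hx => apply_le_apply_iff_of_lt hτodd hτeven (mem_finPairsLT.1 hx),
      card_finPairsLT_filter_snd n (2 ∣ · + 1)]
    exact sum_congr rfl fun a _ => Nat.card_multiples a 2
  refine ⟨?_, ?_, ?_⟩
  · have := two_mul_sum_range_div_two_add n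
    rw [Finset.sum_range_id] at this
    omega
  · rw [sign_eq_neg_one_pow_card_filter_le, hτ, hP]
    push_cast
    rfl
  · rw [hP, sum_range_div_two, Nat.even_mul, Nat.even_iff, Nat.even_iff]
    omega

/-- Let `n ≥ 2` and `P' = {(i,j) : 1 ≤ i < j ≤ n, i + j ≤ n}`.  Then
`|P'| = (1/2)(n(n−1)/2 − ⌊n/2⌋)`, and `(−1)^{|P'|} = sgn(τ_n)` where `τ_n` is the
permutation sending `2t−1 ↦ t`, `2t ↦ n+1−t`; equivalently `|P'|` is even exactly
when `n` is even or `n ≡ 1 (mod 4)`. -/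
theorem card_P'_and_sign (n : ℕ) (hn : 2 ≤ n)
    (P' : Finset (ℕ × ℕ))
    (hP' : P' = (Finset.Icc 1 n ×ˢ Finset.Icc 1 n).filter
      (fun p => p.1 < p.2 ∧ p.1 + p.2 ≤ n))
    (τ : Equiv.Perm (Fin n))
    (hτodd : ∀ i : Fin n, i.val % 2 = 0 → (τ i).val = i.val / 2)
    (hτeven : ∀ i : Fin n, i.val % 2 = 1 → (τ i).val = n - (i.val + 1) / 2) :
    2 * P'.card = n * (n - 1) / 2 - n / 2 ∧
    ((-1 : ℤ) ^ P'.card = (Equiv.Perm.sign τ : ℤ)) ∧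
    (Even P'.card ↔ (n % 2 = 0 ∨ n % 4 = 1)) :=
  card_P'_and_sign_general n P' hP' τ hτodd hτeven
end

section
/- (Weyl denominator identity for sl(n).) In the group algebra of the lattice ℤ^n over ℚ, with ρ = Σ_{i=1}^n (n−i) ε_i, one has e^{ρ} ∏_{1 ≤ i < j ≤ n} (1 − e^{ε_j − ε_i}) = Σ_{w ∈ S_n} sgn(w) e^{w(ρ)}. -/
open Finset

section WeylAux

variable {n : ℕ}

private lemma weyl_single_sum {ι : Type} (s : Finset ι) (g : ι → (Fin n → ℤ)) :
    AddMonoidAlgebra.single (∑ i ∈ s, g i) (1 : ℚ)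
      = ∏ i ∈ s, AddMonoidAlgebra.single (g i) (1 : ℚ) := by
  classical
  induction s using Finset.cons_induction with
  | empty => simp [AddMonoidAlgebra.one_def]
  | cons a s ha ih =>
      rw [Finset.sum_cons, Finset.prod_cons, ← ih, AddMonoidAlgebra.single_mul_single, one_mul]

private lemma weyl_prod_pairs {M : Type*} [CommMonoid M] (f : Fin n → Fin n → M) :
    ∏ p ∈ univ.filter (fun p : Fin n × Fin n => p.1 < p.2), f p.1 p.2
      = ∏ i : Fin n, ∏ j ∈ Ioi i, f i j := by
  rw [Finset.prod_filter, ← Finset.univ_product_univ, Finset.prod_product]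
  refine Finset.prod_congr rfl fun i _ => ?_
  rw [← Finset.prod_filter]
  congr 1
  ext j; simp

private lemma weyl_sum_pairs {M : Type*} [AddCommMonoid M] (f : Fin n → Fin n → M) :
    ∑ p ∈ univ.filter (fun p : Fin n × Fin n => p.1 < p.2), f p.1 p.2
      = ∑ i : Fin n, ∑ j ∈ Ioi i, f i j := by
  rw [Finset.sum_filter, ← Finset.univ_product_univ, Finset.sum_product]
  refine Finset.sum_congr rfl fun i _ => ?_
  rw [← Finset.sum_filter]
  congr 1
  ext j; simp

private lemma weyl_rho_sum :
    (fun i : Fin n => (n : ℤ) - 1 - (i.val : ℤ))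
      = ∑ p ∈ univ.filter (fun p : Fin n × Fin n => p.1 < p.2), Pi.single p.1 (1 : ℤ) := by
  funext k
  have h2 : (∑ p ∈ univ.filter (fun p : Fin n × Fin n => p.1 < p.2),
      (Pi.single p.1 (1 : ℤ) : Fin n → ℤ) k)
      = ∑ i : Fin n, ∑ _j ∈ Ioi i, (Pi.single i (1 : ℤ) : Fin n → ℤ) k :=
    weyl_sum_pairs (fun i _ => (Pi.single i (1 : ℤ) : Fin n → ℤ) k)
  rw [Finset.sum_apply, h2]
  simp only [Finset.sum_const]
  rw [Finset.sum_eq_single k]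
  · rw [Fin.card_Ioi, Pi.single_eq_same, nsmul_eq_mul, mul_one]
    have hk := k.isLt
    omega
  · intro b _ hb
    rw [Pi.single_eq_of_ne' hb, smul_zero]
  · intro h; exact absurd (Finset.mem_univ k) h

private lemma weyl_rho_perm (w : Equiv.Perm (Fin n)) :
    (fun i : Fin n => (n : ℤ) - 1 - (i.val : ℤ)) ∘ w.symm
      = ∑ j : Fin n, ((Fin.rev j).val • Pi.single (w j) (1 : ℤ)) := by
  funext k
  rw [Finset.sum_apply, Finset.sum_eq_single (w.symm k)]
  · rw [Pi.smul_apply, Equiv.apply_symm_apply w k, Pi.single_eq_same,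
      nsmul_eq_mul, mul_one, Fin.val_rev]
    have hk := (w.symm k).isLt
    simp only [Function.comp_apply]
    omega
  · intro b _ hb
    have hbk : w b ≠ k := fun h => hb (by rw [← h, Equiv.symm_apply_apply])
    rw [Pi.smul_apply, Pi.single_eq_of_ne' hbk, smul_zero]
  · intro h; exact absurd (Finset.mem_univ _) h

end WeylAux

/-- Weyl denominator identity for `sl(n)` in the group algebra `ℚ[ℤ^n]`:
`e^ρ ∏_{i<j} (1 − e^{ε_j − ε_i}) = Σ_{w ∈ S_n} sgn(w) e^{w(ρ)}`,
with `ρ = Σ_i (n−i) ε_i` and `S_n` permuting the coordinates. -/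
theorem weyl_denominator_sl (n : ℕ)
    (e : (Fin n → ℤ) → AddMonoidAlgebra ℚ (Fin n → ℤ))
    (he : ∀ v, e v = AddMonoidAlgebra.single v 1)
    (ρ : Fin n → ℤ) (hρ : ρ = fun i => (n : ℤ) - 1 - (i.val : ℤ)) :
    e ρ * ∏ p ∈ univ.filter (fun p : Fin n × Fin n => p.1 < p.2),
        (1 - e (Pi.single p.2 1 - Pi.single p.1 1)) =
      ∑ w : Equiv.Perm (Fin n), ((Equiv.Perm.sign w : ℤ) : ℚ) • e (ρ ∘ w.symm) := by
  classical
  set x : Fin n → AddMonoidAlgebra ℚ (Fin n → ℤ) :=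
    fun i => AddMonoidAlgebra.single (Pi.single i 1 : Fin n → ℤ) (1 : ℚ) with hx
  -- Left-hand side equals the Vandermonde-type product
  have hL : e ρ * ∏ p ∈ univ.filter (fun p : Fin n × Fin n => p.1 < p.2),
      (1 - e (Pi.single p.2 1 - Pi.single p.1 1))
      = ∏ p ∈ univ.filter (fun p : Fin n × Fin n => p.1 < p.2), (x p.1 - x p.2) := by
    have heρ : e ρ = ∏ p ∈ univ.filter (fun p : Fin n × Fin n => p.1 < p.2), x p.1 := by
      rw [he, hρ, weyl_rho_sum, weyl_single_sum]
    rw [heρ, ← Finset.prod_mul_distrib]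
    refine Finset.prod_congr rfl fun p _ => ?_
    rw [he, hx, mul_sub, mul_one, AddMonoidAlgebra.single_mul_single, mul_one,
      add_sub_cancel]
  -- Right-hand side equals a determinant
  have hR : (∑ w : Equiv.Perm (Fin n), ((Equiv.Perm.sign w : ℤ) : ℚ) • e (ρ ∘ w.symm))
      = (Matrix.of fun i j : Fin n => x i ^ (Fin.rev j).val).det := by
    rw [Matrix.det_apply]
    refine Finset.sum_congr rfl fun w _ => ?_
    have hterm : e (ρ ∘ w.symm) = ∏ j : Fin n, x (w j) ^ (Fin.rev j).val := by
      rw [he, hρ, weyl_rho_perm, weyl_single_sum]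
      refine Finset.prod_congr rfl fun j _ => ?_
      rw [hx, AddMonoidAlgebra.single_pow, one_pow]
    rw [hterm, Units.smul_def, ← Int.cast_smul_eq_zsmul ℚ]
    rfl
  rw [hL, hR]
  have hM : (Matrix.of fun i j : Fin n => x i ^ (Fin.rev j).val)
      = (Matrix.vandermonde (x ∘ Fin.rev)).submatrix Fin.revPerm Fin.revPerm := by
    ext i j
    simp [Matrix.vandermonde_apply, Fin.rev_rev]
  rw [hM, Matrix.det_submatrix_equiv_self, Matrix.det_vandermonde]
  have hleft : (∏ p ∈ univ.filter (fun p : Fin n × Fin n => p.1 < p.2), (x p.1 - x p.2))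
      = ∏ i : Fin n, ∏ j ∈ Ioi i, (x i - x j) :=
    weyl_prod_pairs (fun i j => x i - x j)
  have hright : (∏ p ∈ univ.filter (fun p : Fin n × Fin n => p.1 < p.2),
      (x (Fin.rev p.2) - x (Fin.rev p.1)))
      = ∏ i : Fin n, ∏ j ∈ Ioi i, ((x ∘ Fin.rev) j - (x ∘ Fin.rev) i) :=
    weyl_prod_pairs (fun i j => x (Fin.rev j) - x (Fin.rev i))
  rw [← hright]
  refine Finset.prod_nbij' (fun p : Fin n × Fin n => (p.2.rev, p.1.rev))
    (fun p : Fin n × Fin n => (p.2.rev, p.1.rev)) ?_ ?_ ?_ ?_ ?_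
  · intro p hp
    simp only [Finset.mem_filter, Finset.mem_univ, true_and] at hp ⊢
    exact Fin.rev_lt_rev.mpr hp
  · intro p hp
    simp only [Finset.mem_filter, Finset.mem_univ, true_and] at hp ⊢
    exact Fin.rev_lt_rev.mpr hp
  · intro p _; simp [Fin.rev_rev]
  · intro p _; simp [Fin.rev_rev]
  · intro p _; simp [Fin.rev_rev]
end

section
/- Let r = ⌊n/2⌋, β_k = −(ε_{2k−1}+ε_{2k}), ρ = Σ(n−i)ε_i, ρ^⇑ = ε_1+ε_3+⋯+ε_{2r−1}. Then Σ_{m_1 ≥ m_2 ≥ ⋯ ≥ m_r ≥ 0} ℱ_W(e^{ρ − m_1β_1 − ⋯ − m_rβ_r}) = Σ_{m_1 ≥ ⋯ ≥ m_r ≥ 0} ℱ_W(e^{ρ^⇑ − m_1β_1 − ⋯ − m_rβ_r}), where ℱ_W(a) = Σ_{w∈S_n} sgn(w) w(a); i.e., the two sums have exactly the same nonzero terms. -/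
open Finset

lemma vanish_aux {n : ℕ} (μ : Fin n → ℤ) (i j : Fin n) (hij : μ i = μ j) (hne : i ≠ j) :
    (∑ w : Equiv.Perm (Fin n),
      ((Equiv.Perm.sign w : ℤ) : ℚ) • AddMonoidAlgebra.single (μ ∘ w.symm) (1:ℚ)) = 0 := by
  have hτ : μ ∘ (Equiv.swap i j) = μ := by
    funext x
    simp only [Function.comp_apply]
    rcases eq_or_ne x i with rfl | hxi
    · rw [Equiv.swap_apply_left]; exact hij.symm
    · rcases eq_or_ne x j with rfl | hxj
      · rw [Equiv.swap_apply_right]; exact hij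
      · rw [Equiv.swap_apply_of_ne_of_ne hxi hxj]
  have hmain : (∑ w : Equiv.Perm (Fin n),
        ((Equiv.Perm.sign w : ℤ):ℚ) • AddMonoidAlgebra.single (μ ∘ w.symm) (1:ℚ))
      = ∑ w : Equiv.Perm (Fin n),
        -(((Equiv.Perm.sign w : ℤ):ℚ) • AddMonoidAlgebra.single (μ ∘ w.symm) (1:ℚ)) := by
    apply Fintype.sum_equiv (Equiv.mulRight (Equiv.swap i j))
    intro w
    have hsgn : Equiv.Perm.sign (w * Equiv.swap i j) = - Equiv.Perm.sign w := by
      rw [Equiv.Perm.sign_mul, Equiv.Perm.sign_swap hne, mul_neg_one]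
    have hcomp : μ ∘ (w * Equiv.swap i j).symm = μ ∘ w.symm := by
      funext x
      simp only [Function.comp_apply]
      have h1 : (w * Equiv.swap i j).symm x = Equiv.swap i j (w.symm x) := by
        rw [Equiv.symm_apply_eq]
        simp [Equiv.Perm.mul_apply, Equiv.swap_apply_self]
      rw [h1]
      exact congrFun hτ (w.symm x)
    simp only [Equiv.coe_mulRight]
    rw [hsgn, hcomp]
    push_cast
    rw [neg_smul, neg_neg]
  have h2 : (2:ℚ) • (∑ w : Equiv.Perm (Fin n),
      ((Equiv.Perm.sign w : ℤ):ℚ) • AddMonoidAlgebra.single (μ ∘ w.symm) (1:ℚ)) = 0 := by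
    rw [two_smul]
    nth_rewrite 2 [hmain]
    rw [← Finset.sum_add_distrib]
    simp
  rcases smul_eq_zero.mp h2 with h | h
  · norm_num at h
  · exact h

/-- With `r = ⌊n/2⌋`, `β_k = −(ε_{2k−1}+ε_{2k})`, `ρ = Σ (n−i)ε_i`,
`ρ^⇑ = ε_1 + ε_3 + ⋯ + ε_{2r−1}`, and `ℱ_W(e^μ) = Σ_{w∈S_n} sgn(w) e^{w(μ)}`,
the series `Σ_{m_1 ≥ ⋯ ≥ m_r ≥ 0} ℱ_W(e^{ρ − Σ m_k β_k})` and
`Σ_{m_1 ≥ ⋯ ≥ m_r ≥ 0} ℱ_W(e^{ρ^⇑ − Σ m_k β_k})` have exactly the same nonzero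
terms. -/
theorem thin_same_nonzero_terms (n : ℕ) (hn : 2 ≤ n) (r : ℕ) (hr : r = n / 2)
    (F : (Fin n → ℤ) → AddMonoidAlgebra ℚ (Fin n → ℤ))
    (hF : ∀ μ, F μ = ∑ w : Equiv.Perm (Fin n),
      ((Equiv.Perm.sign w : ℤ) : ℚ) • AddMonoidAlgebra.single (μ ∘ w.symm) 1)
    (ρ : Fin n → ℤ) (hρ : ρ = fun i => (n : ℤ) - 1 - (i.val : ℤ))
    (ρup : Fin n → ℤ) (hρup : ρup = fun i => if i.val % 2 = 0 ∧ i.val < 2 * r then 1 else 0)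
    (β : Fin r → (Fin n → ℤ))
    (hβ : ∀ k, β k = fun i => if i.val = 2 * k.val ∨ i.val = 2 * k.val + 1 then -1 else 0) :
    {x : AddMonoidAlgebra ℚ (Fin n → ℤ) | x ≠ 0 ∧
        ∃ m : Fin r → ℕ, (∀ k l : Fin r, k ≤ l → m l ≤ m k) ∧
          x = F (ρ - ∑ k : Fin r, (m k : ℤ) • β k)} =
      {x : AddMonoidAlgebra ℚ (Fin n → ℤ) | x ≠ 0 ∧
        ∃ m : Fin r → ℕ, (∀ k l : Fin r, k ≤ l → m l ≤ m k) ∧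
          x = F (ρup - ∑ k : Fin r, (m k : ℤ) • β k)} := by
  have hsum : ∀ (c : Fin r → ℕ) (i : Fin n),
      (∑ k : Fin r, (c k : ℤ) • β k) i =
      if h : i.val / 2 < r then -((c ⟨i.val / 2, h⟩ : ℕ) : ℤ) else 0 := by
    intro c i
    rw [Finset.sum_apply]
    simp only [hβ, Pi.smul_apply, smul_eq_mul]
    split_ifs with h
    · rw [Finset.sum_eq_single (⟨i.val / 2, h⟩ : Fin r)]
      · have hc : (i:ℕ) = 2*((⟨(i:ℕ)/2, h⟩ : Fin r) : ℕ) ∨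
            (i:ℕ) = 2*((⟨(i:ℕ)/2, h⟩ : Fin r) : ℕ) + 1 := by
          show (i:ℕ) = 2*((i:ℕ)/2) ∨ (i:ℕ) = 2*((i:ℕ)/2)+1
          omega
        rw [if_pos hc]; ring
      · intro k _ hk
        have hkv : (k:ℕ) ≠ (i:ℕ)/2 := fun hc => hk (Fin.ext hc)
        rw [if_neg (by omega)]; ring
      · intro hmem; exact absurd (Finset.mem_univ _) hmem
    · apply Finset.sum_eq_zero
      intro k _
      have := k.isLt
      rw [if_neg (by omega)]; ring
  have hrel : ∀ (a b : Fin r → ℕ),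
      (∀ k : Fin r, (b k : ℤ) = (a k : ℤ) + n - 2 * k.val - 2) →
      (ρ - ∑ k : Fin r, (a k : ℤ) • β k) = (ρup - ∑ k : Fin r, (b k : ℤ) • β k) := by
    intro a b hab
    funext i
    have hi := i.isLt
    simp only [Pi.sub_apply, hsum, hρ, hρup]
    split_ifs with h h2 h2 <;>
      first
        | (have hab' : ((b ⟨i.val / 2, h⟩ : ℕ) : ℤ)
              = ((a ⟨i.val / 2, h⟩ : ℕ) : ℤ) + n - 2 * (i.val / 2) - 2 := hab ⟨i.val / 2, h⟩
           omega)
        | omega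
  ext x
  simp only [Set.mem_setOf_eq]
  constructor
  · rintro ⟨hx, m, hmono, rfl⟩
    refine ⟨hx, fun k => m k + (n - 2*k.val - 2), ?_, ?_⟩
    · intro k l hkl
      have h1 := hmono k l hkl
      have h2 : k.val ≤ l.val := hkl
      have h3 : l.val < r := l.isLt
      simp only []
      omega
    · exact congrArg F (hrel m (fun k => m k + (n - 2*k.val - 2))
        (fun k => by
          have hlt : k.val < r := k.isLt
          show ((m k + (n - 2*k.val - 2) : ℕ) : ℤ) = ((m k : ℕ) : ℤ) + n - 2*k.val - 2
          omega))
  · rintro ⟨hx, m, hmono, rfl⟩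
    have inj : Function.Injective (ρup - ∑ k : Fin r, (m k : ℤ) • β k) := by
      intro i j hij'
      by_contra hne
      exact hx (by rw [hF]; exact vanish_aux _ i j hij' hne)
    have mk_ne : ∀ (x y : ℕ) (hx' : x < n) (hy : y < n), x ≠ y →
        (ρup - ∑ k : Fin r, (m k : ℤ) • β k) ⟨x, hx'⟩ ≠
        (ρup - ∑ k : Fin r, (m k : ℤ) • β k) ⟨y, hy⟩ := by
      intro x y hx' hy hxy hcontra
      exact hxy (congrArg Fin.val (inj hcontra))
    have e1 : ∀ (a : ℕ) (har : a < r) (h : 2*a < n),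
        (ρup - ∑ k : Fin r, (m k : ℤ) • β k) ⟨2*a, h⟩ = 1 + ((m ⟨a, har⟩ : ℕ) : ℤ) := by
      intro a har h
      have hd : ((⟨2*a, h⟩ : Fin n) : ℕ) / 2 < r := by show 2*a/2 < r; omega
      rw [Pi.sub_apply, hsum, dif_pos hd]
      have he : (⟨((⟨2*a, h⟩ : Fin n) : ℕ) / 2, hd⟩ : Fin r) = ⟨a, har⟩ := by
        apply Fin.ext; show 2*a/2 = a; omega
      rw [he, hρup]
      show (if 2*a % 2 = 0 ∧ 2*a < 2*r then (1:ℤ) else 0) - -((m ⟨a, har⟩ : ℕ) : ℤ)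
        = 1 + ((m ⟨a, har⟩ : ℕ) : ℤ)
      rw [if_pos ⟨by omega, by omega⟩]; ring
    have e2 : ∀ (a : ℕ) (har : a < r) (h : 2*a+1 < n),
        (ρup - ∑ k : Fin r, (m k : ℤ) • β k) ⟨2*a+1, h⟩ = ((m ⟨a, har⟩ : ℕ) : ℤ) := by
      intro a har h
      have hd : ((⟨2*a+1, h⟩ : Fin n) : ℕ) / 2 < r := by show (2*a+1)/2 < r; omega
      rw [Pi.sub_apply, hsum, dif_pos hd]
      have he : (⟨((⟨2*a+1, h⟩ : Fin n) : ℕ) / 2, hd⟩ : Fin r) = ⟨a, har⟩ := by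
        apply Fin.ext; show (2*a+1)/2 = a; omega
      rw [he, hρup]
      show (if (2*a+1) % 2 = 0 ∧ 2*a+1 < 2*r then (1:ℤ) else 0) - -((m ⟨a, har⟩ : ℕ) : ℤ)
        = ((m ⟨a, har⟩ : ℕ) : ℤ)
      rw [if_neg (by omega)]; ring
    have e3 : ∀ (h : 2*r < n),
        (ρup - ∑ k : Fin r, (m k : ℤ) • β k) ⟨2*r, h⟩ = 0 := by
      intro h
      have hd : ¬ ((⟨2*r, h⟩ : Fin n) : ℕ) / 2 < r := by show ¬ (2*r/2 < r); omega
      rw [Pi.sub_apply, hsum, dif_neg hd, hρup]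
      show (if 2*r % 2 = 0 ∧ 2*r < 2*r then (1:ℤ) else 0) - 0 = 0
      rw [if_neg (by omega)]; ring
    have hr1 : r - 1 < r := by omega
    -- gap-2 property between consecutive entries
    have gap : ∀ (a : ℕ) (ha : a < r) (ha1 : a + 1 < r),
        m ⟨a+1, ha1⟩ + 2 ≤ m ⟨a, ha⟩ := by
      intro a ha ha1
      have h1 : 2*a+1 < n := by omega
      have h2' : 2*(a+1) < n := by omega
      have h3' : 2*(a+1)+1 < n := by omega
      have A := mk_ne (2*a+1) (2*(a+1)) h1 h2' (by omega)
      have B := mk_ne (2*a+1) (2*(a+1)+1) h1 h3' (by omega)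
      rw [e2 a ha h1, e1 (a+1) ha1 h2'] at A
      rw [e2 a ha h1, e2 (a+1) ha1 h3'] at B
      have C : m ⟨a+1, ha1⟩ ≤ m ⟨a, ha⟩ :=
        hmono ⟨a, ha⟩ ⟨a+1, ha1⟩ (by show a ≤ a + 1; omega)
      omega
    have chain : ∀ (d a : ℕ) (h1 : a + d < r) (h2 : a < r),
        m ⟨a + d, h1⟩ + 2*d ≤ m ⟨a, h2⟩ := by
      intro d
      induction d with
      | zero =>
        intro a h1 h2
        have hE : m ⟨a + 0, h1⟩ = m ⟨a, h2⟩ := rfl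
        omega
      | succ d ih =>
        intro a h1 h2
        have ha1 : a + 1 < r := by omega
        have h1' : (a + 1) + d < r := by omega
        have hE : (⟨a + (d+1), h1⟩ : Fin r) = ⟨(a+1) + d, h1'⟩ :=
          Fin.ext (show a + (d+1) = (a+1) + d by omega)
        have hE' := congrArg m hE
        have hc := ih (a+1) h1' ha1
        have hg := gap a h2 ha1
        omega
    have base : n ≤ m ⟨r-1, hr1⟩ + 2*(r-1) + 2 := by
      by_cases hodd : 2*r < n
      · have hlt : 2*(r-1)+1 < n := by omega
        have hne := mk_ne (2*(r-1)+1) (2*r) hlt hodd (by omega)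
        rw [e2 (r-1) hr1 hlt, e3 hodd] at hne
        omega
      · omega
    have key' : ∀ k : Fin r, n ≤ m k + 2*k.val + 2 := by
      intro k
      have hl : k.val + (r - 1 - k.val) < r := by omega
      have hchain := chain (r - 1 - k.val) k.val hl k.isLt
      have hE : (⟨k.val + (r - 1 - k.val), hl⟩ : Fin r) = ⟨r-1, hr1⟩ :=
        Fin.ext (show k.val + (r - 1 - k.val) = r - 1 by omega)
      rw [hE] at hchain
      have hmk : m ⟨k.val, k.isLt⟩ = m k := rfl
      omega
    refine ⟨hx, fun k => m k + 2*k.val + 2 - n, ?_, ?_⟩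
    · intro k l hkl
      have h2 : k.val ≤ l.val := hkl
      have hl : k.val + (l.val - k.val) < r := by omega
      have hchain := chain (l.val - k.val) k.val hl k.isLt
      have hE : (⟨k.val + (l.val - k.val), hl⟩ : Fin r) = l :=
        Fin.ext (show k.val + (l.val - k.val) = l.val by omega)
      rw [hE] at hchain
      have hmk : m ⟨k.val, k.isLt⟩ = m k := rfl
      have h3 := key' l
      have h4 := key' k
      simp only []
      omega
    · exact (congrArg F (hrel (fun k => m k + 2*k.val + 2 - n) m
        (fun k => by
          have := key' k
          show ((m k : ℕ) : ℤ) = ((m k + 2*k.val + 2 - n : ℕ) : ℤ) + n - 2*k.val - 2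
          omega))).symm
end

section
/- (Key inductive identity for the thick case.) Let n ≥ 2, ρ_n = −Σ_{i=1}^n i ε_i and ρ_{n−1} = −Σ_{i=1}^{n−1} i ε_{i+1}. Then in ℚ[ℤ^n]: Σ_{w∈S_n} sgn(w) e^{w(ρ_n)} · (e^{ε_1+⋯+ε_n} − e^{−ε_1−⋯−ε_n}) = Σ_{w∈S_n} sgn(w) · w( e^{ρ_{n−1}} ∏_{i=1}^n (1 − e^{−ε_1−ε_i}) ). -/
/-!
Write `J f = ∑_w sgn(w) w(f)`. Factors fixed by every permutation pass through `J`, so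
the left side is `J(e^{ρ_{n-1}}) - J(e^{ρ_n}) e^{-ε_1-⋯-ε_n}`, using
`ρ_n + ε_1 + ⋯ + ε_n = ρ_{n-1}`. On the right,
`∏_i (1 - e^{-ε_1} e^{-ε_i}) = ∑_j (-e^{-ε_1})^j e_j(e^{-ε_1}, …, e^{-ε_n})` with `e_j`
elementary symmetric, so the right side is `∑_j (-1)^j J(e^{ρ_{n-1} - j ε_1}) e_j`.
For `0 < j < n` the exponent `ρ_{n-1} - j ε_1` has equal coordinates `1` and `j + 1`, so the
transposition of these kills the term. The term `j = 0` is `J(e^{ρ_{n-1}})`, and for `j = n`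
the exponent is `ρ_n` rotated cyclically, a permutation of sign `(-1)^{n-1}`.
-/

open Finset Equiv AddMonoidAlgebra

section PermAction

variable {R : Type*} [CommSemiring R] {ι M : Type*} [AddCommMonoid M]

noncomputable def permAlgHom (w : Perm ι) :
    AddMonoidAlgebra R (ι → M) →ₐ[R] AddMonoidAlgebra R (ι → M) :=
  mapDomainAlgHom R R
    { toFun := fun v => v ∘ w.symm, map_zero' := rfl, map_add' := fun _ _ => rfl }

theorem permAlgHom_apply (w : Perm ι) (f : AddMonoidAlgebra R (ι → M)) :
    permAlgHom w f = mapDomain (fun v : ι → M => v ∘ w.symm) f := rfl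

theorem permAlgHom_single (w : Perm ι) (v : ι → M) (r : R) :
    permAlgHom w (single v r) = single (v ∘ w.symm) r :=
  mapDomain_single

theorem permAlgHom_mul (w u : Perm ι) :
    permAlgHom (R := R) (M := M) (w * u) = (permAlgHom w).comp (permAlgHom u) := by
  ext v
  simp only [permAlgHom_single, AlgHom.comp_apply]
  rfl

theorem permAlgHom_aeval_of_isSymmetric {p : MvPolynomial ι R} (hp : p.IsSymmetric)
    {x : ι → AddMonoidAlgebra R (ι → M)} (hx : ∀ w i, permAlgHom w (x i) = x (w i))
    (w : Perm ι) : permAlgHom w (MvPolynomial.aeval x p) = MvPolynomial.aeval x p := by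
  rw [MvPolynomial.comp_aeval_apply, funext (hx w)]
  exact (MvPolynomial.aeval_rename ..).symm.trans (by rw [hp w])

end PermAction

section Alternant

variable {R : Type*} [CommRing R] {ι M : Type*} [Fintype ι] [DecidableEq ι] [AddCommMonoid M]

noncomputable def alternant :
    AddMonoidAlgebra R (ι → M) →ₗ[R] AddMonoidAlgebra R (ι → M) :=
  ∑ w : Perm ι, ((Perm.sign w : ℤ) : R) • (permAlgHom w).toLinearMap

theorem alternant_apply (f : AddMonoidAlgebra R (ι → M)) :
    alternant f = ∑ w : Perm ι, ((Perm.sign w : ℤ) : R) • permAlgHom w f := by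
  simp [alternant]

theorem alternant_permAlgHom (u : Perm ι) (f : AddMonoidAlgebra R (ι → M)) :
    alternant (permAlgHom u f) = ((Perm.sign u : ℤ) : R) • alternant f := by
  simp only [alternant_apply, Finset.smul_sum, smul_smul, ← AlgHom.comp_apply, ← permAlgHom_mul]
  refine Fintype.sum_equiv (Equiv.mulRight u) _ _ fun w => ?_
  rw [coe_mulRight, Perm.sign_mul, Units.val_mul, Int.cast_mul, mul_left_comm, ← Int.cast_mul,
    ← Units.val_mul, Int.units_mul_self, Units.val_one, Int.cast_one, mul_one]

theorem alternant_mul_of_forall_permAlgHom_eq (f : AddMonoidAlgebra R (ι → M))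
    {g : AddMonoidAlgebra R (ι → M)} (hg : ∀ w, permAlgHom w g = g) :
    alternant (f * g) = alternant f * g := by
  simp only [alternant_apply, map_mul, hg, Finset.sum_mul, smul_mul_assoc]

theorem alternant_single_eq_zero {v : ι → M} {p q : ι} (hpq : p ≠ q) (hv : v p = v q)
    (r : R) :
    alternant (single v r) = 0 := by
  rw [alternant_apply]
  refine Finset.sum_involution (fun w _ => w * swap p q) (fun w _ => ?_) (fun w _ _ => ?_)
    (fun _ _ => mem_univ _) (fun w _ => by simp [mul_assoc])
  · have hvs : v ∘ swap p q = v := by simp [comp_swap_eq_update, hv]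
    have hvw : v ∘ ⇑(w * swap p q).symm = v ∘ w.symm :=
      funext fun i => congrFun hvs (w.symm i)
    simp [permAlgHom_single, Perm.sign_mul, Perm.sign_swap hpq, hvw]
  · exact mt mul_swap_eq_iff.mp hpq

theorem alternant_single_mul_single_const (v : ι → M) (m : M) (r s : R) :
    alternant (single v r) * single (fun _ => m) s =
      alternant (single (v + fun _ => m) (r * s)) := by
  rw [← alternant_mul_of_forall_permAlgHom_eq _ fun w => by rw [permAlgHom_single]; rfl,
    single_mul_single]

end Alternant

theorem permAlgHom_single_neg_single {R ι M : Type*} [CommSemiring R] [DecidableEq ι]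
    [AddCommGroup M] (w : Perm ι) (i : ι) (m : M) (r : R) :
    permAlgHom w (single (-Pi.single i m) r) = single (-Pi.single (w i) m) r := by
  rw [permAlgHom_single]
  congr 1
  funext k
  simp [Pi.single_apply, symm_apply_eq]

theorem prod_one_sub_mul_eq_sum_esymm {R S ι : Type*} [CommRing R] [CommRing S] [Algebra R S]
    [Fintype ι] (a : S) (x : ι → S) :
    ∏ i, (1 - a * x i) =
      ∑ j ∈ range (Fintype.card ι + 1),
        (-a) ^ j * MvPolynomial.aeval x (MvPolynomial.esymm ι R j) := by
  simp_rw [sub_eq_add_neg, prod_one_add, neg_mul_eq_neg_mul, prod_mul_distrib, prod_const,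
    sum_powerset, card_univ, MvPolynomial.esymm, map_sum, map_prod, MvPolynomial.aeval_X, mul_sum]
  refine sum_congr rfl fun j _ => sum_congr rfl fun t ht => ?_
  rw [(mem_powersetCard.mp ht).2]

theorem aeval_esymm_card {R S ι : Type*} [CommRing R] [CommRing S] [Algebra R S]
    [Fintype ι] (x : ι → S) :
    MvPolynomial.aeval x (MvPolynomial.esymm ι R (Fintype.card ι)) = ∏ i, x i := by
  simp [MvPolynomial.esymm, ← card_univ, powersetCard_self]

section ThickCase

variable {R : Type*} [CommRing R]

theorem alternant_single_mul_prod_one_sub {ι : Type*} [Fintype ι] [DecidableEq ι]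
    (v : ι → ℤ) (p : ι) :
    alternant (single v (1 : R) * ∏ i, (1 - single (-(Pi.single p 1 + Pi.single i 1)) 1)) =
      ∑ j ∈ range (Fintype.card ι + 1),
        alternant (single (v - j • Pi.single p 1) ((-1) ^ j)) *
        MvPolynomial.aeval (fun i => single (-Pi.single i (1 : ℤ)) (1 : R))
          (MvPolynomial.esymm ι R j) := by
  have hfactor : ∀ i : ι, single (-(Pi.single p 1 + Pi.single i 1 : ι → ℤ)) (1 : R) =
      single (-Pi.single p 1) 1 * single (-Pi.single i 1) 1 := fun i => by
    rw [single_mul_single, neg_add, mul_one]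
  simp_rw [hfactor, prod_one_sub_mul_eq_sum_esymm (R := R), mul_sum, ← mul_assoc, map_sum]
  refine sum_congr rfl fun j _ => ?_
  rw [alternant_mul_of_forall_permAlgHom_eq _ (permAlgHom_aeval_of_isSymmetric
    (MvPolynomial.esymm_isSymmetric ι R j) fun w i => permAlgHom_single_neg_single w i 1 1),
    ← single_neg, single_pow, single_mul_single, one_mul, smul_neg, sub_eq_add_neg]

-- `ρ_n` and `ρ_{n-1}`; coordinate `i : Fin n` stands for `ε_{i+1}`.
def rho (n : ℕ) : Fin n → ℤ := fun i => -((i.val : ℤ) + 1)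

def rhoPrev (n : ℕ) : Fin n → ℤ := fun i => -(i.val : ℤ)

theorem rho_add_one (n : ℕ) : rho n + (fun _ => 1) = rhoPrev n := by
  funext i
  simp [rho, rhoPrev]

theorem rhoPrev_sub_smul_single_zero (n : ℕ) :
    rhoPrev (n + 1) - (n + 1) • Pi.single 0 1 = rho (n + 1) ∘ (finRotate (n + 1)).symm := by
  rw [Equiv.eq_comp_symm]
  funext i
  induction i using Fin.lastCases with
  | last => simp [rho, rhoPrev]
  | cast j => simp [rho, rhoPrev, Fin.coeSucc_eq_succ, Fin.succ_ne_zero]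

theorem alternant_rho_mul_single_sub (n : ℕ) :
    alternant (single (rho n) (1 : R)) * (single (fun _ => 1) 1 - single (fun _ => -1) 1) =
      alternant (single (rhoPrev n) 1) - alternant (single (rho n) 1) * single (fun _ => -1) 1 := by
  rw [mul_sub, alternant_single_mul_single_const, mul_one, rho_add_one]

theorem alternant_rhoPrev_mul_prod_one_sub (n : ℕ) :
    alternant (single (rhoPrev (n + 1)) (1 : R) *
        ∏ i, (1 - single (-(Pi.single 0 1 + Pi.single i 1)) 1)) =
      alternant (single (rhoPrev (n + 1)) 1) -
        alternant (single (rho (n + 1)) 1) * single (fun _ => -1) 1 := by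
  have hvanish : ∀ j ∈ range n, alternant (single (rhoPrev (n + 1) - (j + 1) • Pi.single 0 1)
      ((-1 : R) ^ (j + 1))) = 0 := by
    intro j hj
    have hne : (0 : Fin (n + 1)) ≠ ⟨j + 1, by simp at hj; omega⟩ := Fin.ne_of_val_ne (by simp)
    refine alternant_single_eq_zero hne ?_ _
    simp [rhoPrev]
  have htop : MvPolynomial.aeval (fun i => single (-Pi.single i (1 : ℤ)) (1 : R))
      (MvPolynomial.esymm (Fin (n + 1)) R (n + 1)) = single (fun _ => -1) 1 := by
    have := aeval_esymm_card (R := R) fun i : Fin (n + 1) => single (-Pi.single i (1 : ℤ)) (1 : R)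
    rw [Fintype.card_fin] at this
    rw [this, prod_single, sum_neg_distrib, univ_sum_single, prod_const_one]
    rfl
  have hsign : ((((-1 : ℤˣ) ^ n : ℤˣ) : ℤ) : R) * (-1 : R) ^ (n + 1) = -1 := by
    push_cast
    rw [← pow_add]
    exact Odd.neg_one_pow ⟨n, by ring⟩
  rw [alternant_single_mul_prod_one_sub, Fintype.card_fin, sum_range_succ, sum_range_succ',
    sum_eq_zero fun j hj => by rw [hvanish j hj, zero_mul], htop, rhoPrev_sub_smul_single_zero,
    ← permAlgHom_single, alternant_permAlgHom, sign_finRotate, zero_add, zero_smul, sub_zero,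
    pow_zero, MvPolynomial.esymm_zero, map_one, mul_one, Nat.add_sub_cancel,
    ← mul_one ((-1 : R) ^ (n + 1)), ← smul_single', map_smul, smul_smul, hsign, neg_one_smul,
    neg_mul, sub_eq_add_neg]

end ThickCase

/-- Key inductive identity for the thick case.  With `ρ_n = −Σ_{i=1}^n i ε_i` and
`ρ_{n−1} = −Σ_{i=1}^{n−1} i ε_{i+1}`, in `ℚ[ℤ^n]`:
`(Σ_w sgn(w) e^{w(ρ_n)}) (e^{ε_1+⋯+ε_n} − e^{−ε_1−⋯−ε_n})
  = Σ_w sgn(w) w( e^{ρ_{n−1}} ∏_{i=1}^n (1 − e^{−ε_1−ε_i}) )`. -/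
theorem thick_inductive_identity (n : ℕ) (hn : 2 ≤ n)
    (e : (Fin n → ℤ) → AddMonoidAlgebra ℚ (Fin n → ℤ))
    (he : ∀ v, e v = AddMonoidAlgebra.single v 1)
    (ρn : Fin n → ℤ) (hρn : ρn = fun i => -((i.val : ℤ) + 1))
    (ρn1 : Fin n → ℤ) (hρn1 : ρn1 = fun i => -(i.val : ℤ)) :
    (∑ w : Equiv.Perm (Fin n), ((Equiv.Perm.sign w : ℤ) : ℚ) • e (ρn ∘ w.symm)) *
        (e (fun _ => 1) - e (fun _ => -1)) =
      ∑ w : Equiv.Perm (Fin n), ((Equiv.Perm.sign w : ℤ) : ℚ) •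
        AddMonoidAlgebra.mapDomain (fun v : Fin n → ℤ => v ∘ w.symm)
          (e ρn1 * ∏ i : Fin n,
            (1 - e (-(Pi.single (⟨0, by omega⟩ : Fin n) 1 + Pi.single i 1)))) := by
  obtain ⟨n, rfl⟩ : ∃ m, n = m + 1 := ⟨n - 1, by omega⟩
  subst hρn hρn1
  simp only [he, ← permAlgHom_single, ← permAlgHom_apply, ← alternant_apply, Fin.zero_eta]
  exact (alternant_rho_mul_single_sub (n + 1)).trans (alternant_rhoPrev_mul_prod_one_sub n).symm
end

section
/- Let n ≥ 2, ρ_n = Σ_{i=1}^n (n−i)ε_i, and suppose Σ_{i=1}^n k_i ε_i lies in the support of 𝒜 = e^{ε_1+⋯+ε_r} ∏_{(i,j)∈U}(1 − e^{ε_i+ε_j}), where r = ⌊n/2⌋ and U = {(i,j) : 1 ≤ i < j ≤ n, i+j ≠ n+1}. Then 0 ≤ k_i ≤ n−1 for all i, k_i ≥ 1 for i ≤ r, and k_i ≤ n−2 for i ≥ n+1−r. In particular, every regular element of the support of 𝒜 lies in the S_n-orbit of ρ_n. -/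
/-!
Every monomial of `∏ (1 - e^{d_p})` with `d_p ≥ 0` is a sum of a sub-collection of the `d_p`,
so its exponent lies coordinatewise between `0` and `∑ d_p`. For `d_p = ε_i + ε_j`, coordinate `i`
of `∑ d_p` counts the pairs of `U` through `i`; their other endpoints avoid `i` and its opposite
`n + 1 - i`, so there are at most `n - 1` of them, and at most `n - 2` unless `i` is the middle
index. Shifting by `ε_1 + ⋯ + ε_r` gives the bounds, and an injective `k` with values in
`[0, n - 1]` is a permutation of `ρ_n`.
-/

open Finset

namespace AddMonoidAlgebra

variable {R G : Type*} [CommRing R] [AddCommMonoid G] [DecidableEq G]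

theorem support_coeff_one_sub_single_subset (d : G) (a : R) :
    (1 - single d a).coeff.support ⊆ {0, d} := by
  intro k hk
  rw [coeff_sub] at hk
  rcases mem_union.mp (Finsupp.support_sub hk) with h | h
  · exact mem_insert.mpr (Or.inl (mem_zero.mp (support_coeff_one_subset h)))
  · exact mem_insert_of_mem (Finsupp.support_single_subset h)

theorem support_coeff_prod_one_sub_single_subset_Icc [PartialOrder G] [IsOrderedAddMonoid G]
    {ι : Type*} (s : Finset ι) (d : ι → G) (hd : ∀ i ∈ s, 0 ≤ d i) :
    ((∏ i ∈ s, (1 - single (d i) (1 : R))).coeff.support : Set G) ⊆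
      Set.Icc 0 (∑ i ∈ s, d i) := by
  induction s using Finset.cons_induction with
  | empty =>
    intro k hk
    simp [mem_zero.mp (support_coeff_one_subset hk)]
  | cons a s _ ih =>
    intro k hk
    rw [prod_cons] at hk
    rw [sum_cons]
    obtain ⟨x, hx, y, hy, rfl⟩ := mem_add.mp (support_coeff_mul_subset _ _ hk)
    obtain ⟨hy0, hy⟩ := ih (fun i hi => hd i (mem_cons_of_mem hi)) hy
    have hx' : 0 ≤ x ∧ x ≤ d a := by
      rcases mem_insert.mp (support_coeff_one_sub_single_subset _ _ hx) with rfl | hx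
      · exact ⟨le_rfl, hd a (mem_cons_self a s)⟩
      · rw [mem_singleton.mp hx]
        exact ⟨hd a (mem_cons_self a s), le_rfl⟩
    exact ⟨add_nonneg hx'.1 hy0, add_le_add hx'.2 hy⟩

end AddMonoidAlgebra

theorem exists_perm_coe_eq_of_injective {n : ℕ} {k : Fin n → ℤ} (hk : Function.Injective k)
    (hbound : ∀ i, 0 ≤ k i ∧ k i ≤ (n : ℤ) - 1) : ∃ σ : Equiv.Perm (Fin n), ∀ i, k i = σ i := by
  let f : Fin n → Fin n := fun i => ⟨(k i).toNat, by have := hbound i; omega⟩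
  have hf : Function.Injective f := fun i j hij => by
    have h := Fin.val_eq_of_eq hij
    have := hbound i
    have := hbound j
    exact hk (by simp only [f] at h; omega)
  refine ⟨Equiv.ofBijective f (Finite.injective_iff_bijective.mp hf), fun i => ?_⟩
  have := hbound i
  simp only [Equiv.ofBijective_apply, f]
  omega

/-- The paper's `U`, with `Fin n` indexing from zero. -/
def nonOppositePairs (n : ℕ) : Finset (Fin n × Fin n) :=
  univ.filter fun p => p.1 < p.2 ∧ (p.1.val + 1) + (p.2.val + 1) ≠ n + 1

theorem sum_pairs_apply_add_card_le {n : ℕ} (i : Fin n) :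
    (∑ p ∈ nonOppositePairs n, (Pi.single p.1 1 + Pi.single p.2 1 : Fin n → ℤ)) i +
      #{i, i.rev} ≤ n := by
  set incident := (nonOppositePairs n).filter fun p => p.1 = i ∨ p.2 = i
  have hsum : (∑ p ∈ nonOppositePairs n, (Pi.single p.1 1 + Pi.single p.2 1 : Fin n → ℤ)) i =
      #incident := by
    rw [Finset.sum_apply, ← sum_boole]
    refine sum_congr rfl fun p hp => ?_
    have hlt := (mem_filter.mp hp).2.1
    simp only [Pi.add_apply, Pi.single_apply]
    split_ifs <;> grind
  -- the other endpoint of a pair through `i` is neither `i` nor its opposite `i.rev`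
  have hinj : #incident ≤ #({i, i.rev}ᶜ : Finset (Fin n)) := by
    refine card_le_card_of_injOn (fun p => if p.1 = i then p.2 else p.1) ?_ ?_
    · intro p hp
      simp only [incident, nonOppositePairs, coe_filter, mem_filter, mem_univ, true_and,
        Set.mem_ofPred_eq] at hp
      simp only [coe_compl, coe_insert, coe_singleton, Set.mem_compl_iff, Set.mem_insert_iff,
        Set.mem_singleton_iff, Fin.ext_iff, Fin.val_rev, Fin.lt_def] at hp ⊢
      split_ifs <;> omega
    · intro p hp q hq hpq
      simp only [incident, nonOppositePairs, coe_filter, mem_filter, mem_univ, true_and,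
        Set.mem_ofPred_eq] at hp hq hpq
      ext <;> split_ifs at hpq <;> grind
  have hcompl := card_add_card_compl ({i, i.rev} : Finset (Fin n))
  rw [Fintype.card_fin] at hcompl
  omega

theorem bounds_of_mem_support_prod_nonOppositePairs {R : Type*} [CommRing R] {n : ℕ}
    {m : Fin n → ℤ} (hm : m ∈ (∏ p ∈ nonOppositePairs n, (1 - AddMonoidAlgebra.single
      (Pi.single p.1 1 + Pi.single p.2 1) 1 : AddMonoidAlgebra R (Fin n → ℤ))).coeff.support)
    (i : Fin n) : 0 ≤ m i ∧ m i ≤ n - 1 ∧ (2 * i.val + 1 ≠ n → m i ≤ n - 2) := by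
  obtain ⟨hm0, hmle⟩ := AddMonoidAlgebra.support_coeff_prod_one_sub_single_subset_Icc _ _
    (fun p _ => add_nonneg (Pi.single_nonneg.mpr zero_le_one)
      (Pi.single_nonneg.mpr zero_le_one)) hm
  have hle : m i + #{i, i.rev} ≤ n := (add_le_add_left (hmle i) _).trans
    (sum_pairs_apply_add_card_le i)
  have hcard_pos : 1 ≤ #{i, i.rev} := card_pos.mpr (insert_nonempty _ _)
  refine ⟨hm0 i, by omega, fun hi => ?_⟩
  rw [card_pair fun h => by have := congrArg Fin.val h; rw [Fin.val_rev] at this; omega] at hle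
  omega

theorem support_bounds_general (n : ℕ) (r : ℕ) (hr : r = n / 2)
    (ρ : Fin n → ℤ) (hρ : ρ = fun i => (n : ℤ) - 1 - (i.val : ℤ))
    (A : AddMonoidAlgebra ℚ (Fin n → ℤ))
    (hA : A = AddMonoidAlgebra.single (fun i : Fin n => if i.val < r then (1 : ℤ) else 0) 1 *
      ∏ p ∈ univ.filter
          (fun p : Fin n × Fin n => p.1 < p.2 ∧ (p.1.val + 1) + (p.2.val + 1) ≠ n + 1),
        (1 - AddMonoidAlgebra.single (Pi.single p.1 (1 : ℤ) + Pi.single p.2 1) (1 : ℚ))) :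
    ∀ k ∈ A.coeff.support,
      (∀ i : Fin n, 0 ≤ k i ∧ k i ≤ (n : ℤ) - 1) ∧
      (∀ i : Fin n, i.val < r → 1 ≤ k i) ∧
      (∀ i : Fin n, n - r ≤ i.val → k i ≤ (n : ℤ) - 2) ∧
      (Function.Injective k → ∃ w : Equiv.Perm (Fin n), k = ρ ∘ w.symm) := by
  intro k hk
  set c : Fin n → ℤ := fun i => if i.val < r then 1 else 0 with hc
  rw [hA] at hk
  obtain ⟨m, hm, rfl⟩ := mem_image.mp (AddMonoidAlgebra.support_coeff_single_mul_subset _ _ _ hk)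
  have hm := bounds_of_mem_support_prod_nonOppositePairs hm
  have hbounds (i : Fin n) : 0 ≤ (c + m) i ∧ (c + m) i ≤ (n : ℤ) - 1 := by
    obtain ⟨hm0, hm1, hm2⟩ := hm i
    simp only [Pi.add_apply, hc]
    split_ifs with hi
    · have := hm2 (by omega); omega
    · omega
  refine ⟨hbounds, fun i hi => ?_, fun i hi => ?_, fun hinj => ?_⟩
  · have := (hm i).1
    simp only [Pi.add_apply, hc, if_pos hi]; omega
  · have := (hm i).2.2 (by omega)
    simp only [Pi.add_apply, hc, if_neg (show ¬i.val < r by omega)]; omega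
  · obtain ⟨σ, hσ⟩ := exists_perm_coe_eq_of_injective hinj hbounds
    refine ⟨(σ.trans Fin.revPerm).symm, funext fun i => ?_⟩
    simp only [hσ, hρ, Function.comp_apply, Equiv.symm_symm, Equiv.trans_apply, Fin.revPerm_apply,
      Fin.val_rev]
    omega

/-- Support bounds for `𝒜 = e^{ε_1+⋯+ε_r} ∏_{(i,j)∈U}(1 − e^{ε_i+ε_j})` with
`r = ⌊n/2⌋` and `U = {(i,j) : 1 ≤ i < j ≤ n, i+j ≠ n+1}`: any `Σ k_i ε_i` in the
support satisfies `0 ≤ k_i ≤ n−1`, `k_i ≥ 1` for `i ≤ r` and `k_i ≤ n−2` for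
`i ≥ n+1−r`; in particular every regular element of the support lies in the
`S_n`-orbit of `ρ = Σ (n−i)ε_i`. -/
theorem support_bounds (n : ℕ) (hn : 2 ≤ n) (r : ℕ) (hr : r = n / 2)
    (ρ : Fin n → ℤ) (hρ : ρ = fun i => (n : ℤ) - 1 - (i.val : ℤ))
    (A : AddMonoidAlgebra ℚ (Fin n → ℤ))
    (hA : A = AddMonoidAlgebra.single (fun i : Fin n => if i.val < r then (1 : ℤ) else 0) 1 *
      ∏ p ∈ univ.filter
          (fun p : Fin n × Fin n => p.1 < p.2 ∧ (p.1.val + 1) + (p.2.val + 1) ≠ n + 1),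
        (1 - AddMonoidAlgebra.single (Pi.single p.1 (1 : ℤ) + Pi.single p.2 1) (1 : ℚ))) :
    ∀ k ∈ A.coeff.support,
      (∀ i : Fin n, 0 ≤ k i ∧ k i ≤ (n : ℤ) - 1) ∧
      (∀ i : Fin n, i.val < r → 1 ≤ k i) ∧
      (∀ i : Fin n, n - r ≤ i.val → k i ≤ (n : ℤ) - 2) ∧
      (Function.Injective k → ∃ w : Equiv.Perm (Fin n), k = ρ ∘ w.symm) :=
  support_bounds_general n r hr ρ hρ A hA
end
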